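/- Let Q, K, V ∈ ℝ^{n×d} with d ≥ 1, and let {A^{(s)}, A^{(L)}} be a support basis of QK^⊤, i.e., A^{(s)} + A^{(L)} = QK^⊤ and A^{(s)}, A^{(L)} are disjoint. Let ε₀ > 0 and let W ∈ ℝ^{n×n} satisfy ‖exp(A^{(s)}/d) − W‖_∞ ≤ ε₀. Then the matrix S := W·V + (exp(A^{(L)}/d) − 1_{n×n})·V satisfies ‖S − exp(QK^⊤/d)·V‖_∞ ≤ n·ε₀·‖V‖_∞. -/
import Mathlib


open Matrix

/-- Entrywise exponential of a matrix. -/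
noncomputable def entryExp {n : ℕ} (M : Matrix (Fin n) (Fin n) ℝ) : Matrix (Fin n) (Fin n) ℝ :=
  Matrix.of fun i j => Real.exp (M i j)

/-- The all-ones matrix. -/
def onesMat (n : ℕ) : Matrix (Fin n) (Fin n) ℝ := Matrix.of fun _ _ => (1 : ℝ)

/-- Entrywise `ℓ∞` norm of a matrix: the maximum absolute value of an entry. -/
noncomputable def linf {n m : ℕ} (M : Matrix (Fin n) (Fin m) ℝ) : ℝ := ⨆ i, ⨆ j, |M i j|

lemma linf_nonneg {n m : ℕ} (M : Matrix (Fin n) (Fin m) ℝ) : 0 ≤ linf M := by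
  apply Real.iSup_nonneg
  intro i
  exact Real.iSup_nonneg fun j => abs_nonneg _

lemma abs_le_linf {n m : ℕ} (M : Matrix (Fin n) (Fin m) ℝ) (i : Fin n) (j : Fin m) :
    |M i j| ≤ linf M := by
  have h1 : |M i j| ≤ ⨆ j, |M i j| :=
    le_ciSup (f := fun j => |M i j|) (Set.Finite.bddAbove (Set.finite_range _)) j
  refine h1.trans ?_
  exact le_ciSup (f := fun i => ⨆ j, |M i j|) (Set.Finite.bddAbove (Set.finite_range _)) i

lemma linf_le {n m : ℕ} (M : Matrix (Fin n) (Fin m) ℝ) (c : ℝ) (hc : 0 ≤ c)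
    (h : ∀ i j, |M i j| ≤ c) : linf M ≤ c := by
  apply Real.iSup_le _ hc
  intro i
  exact Real.iSup_le (fun j => h i j) hc

/-- If `{A^{(s)}, A^{(L)}}` is a support basis of `QK^⊤` and `W` approximates
`exp(A^{(s)}/d)` entrywise within `ε₀`, then
`S := W·V + (exp(A^{(L)}/d) − 1_{n×n})·V` satisfies
`‖S − exp(QK^⊤/d)·V‖_∞ ≤ n·ε₀·‖V‖_∞`. -/
theorem gaussian_kde_error {n d : ℕ} (hd : 1 ≤ d)
    (Q K V : Matrix (Fin n) (Fin d) ℝ) (AS AL : Matrix (Fin n) (Fin n) ℝ)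
    (hsum : AS + AL = Q * Kᵀ)
    (hdisj : ∀ i j, AS i j ≠ 0 → AL i j = 0)
    (ε₀ : ℝ) (hε₀ : 0 < ε₀) (W : Matrix (Fin n) (Fin n) ℝ)
    (hW : linf (entryExp (((d : ℝ))⁻¹ • AS) - W) ≤ ε₀) :
    linf (W * V + (entryExp (((d : ℝ))⁻¹ • AL) - onesMat n) * V
        - entryExp (((d : ℝ))⁻¹ • (Q * Kᵀ)) * V) ≤ (n : ℝ) * ε₀ * linf V := by
  -- key entrywise identity
  have key : entryExp (((d : ℝ))⁻¹ • (Q * Kᵀ))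
      = entryExp (((d : ℝ))⁻¹ • AS) + entryExp (((d : ℝ))⁻¹ • AL) - onesMat n := by
    ext i j
    have hQK : (Q * Kᵀ) i j = AS i j + AL i j := by rw [← hsum]; rfl
    simp only [entryExp, onesMat, Matrix.sub_apply, Matrix.add_apply, Matrix.smul_apply,
      Matrix.of_apply, smul_eq_mul, hQK]
    rcases eq_or_ne (AS i j) 0 with h | h
    · rw [h]; simp
    · rw [hdisj i j h]; simp [mul_add]
  have hM : W * V + (entryExp (((d : ℝ))⁻¹ • AL) - onesMat n) * V
      - entryExp (((d : ℝ))⁻¹ • (Q * Kᵀ)) * V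
      = (W - entryExp (((d : ℝ))⁻¹ • AS)) * V := by
    rw [key, Matrix.sub_mul, Matrix.sub_mul, Matrix.sub_mul, Matrix.add_mul]
    abel
  rw [hM]
  have hVnn := linf_nonneg V
  apply linf_le
  · positivity
  · intro i k
    have : ((W - entryExp (((d : ℝ))⁻¹ • AS)) * V) i k
        = ∑ j, (W - entryExp (((d : ℝ))⁻¹ • AS)) i j * V j k := rfl
    rw [this]
    calc |∑ j, (W - entryExp (((d : ℝ))⁻¹ • AS)) i j * V j k|
        ≤ ∑ j, |(W - entryExp (((d : ℝ))⁻¹ • AS)) i j * V j k| :=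
          Finset.abs_sum_le_sum_abs _ _
      _ ≤ ∑ _j : Fin n, ε₀ * linf V := by
          apply Finset.sum_le_sum
          intro j _
          rw [abs_mul]
          have h1 : |(W - entryExp (((d : ℝ))⁻¹ • AS)) i j|
              ≤ ε₀ := by
            have := abs_le_linf (entryExp (((d : ℝ))⁻¹ • AS) - W) i j
            rw [Matrix.sub_apply] at this ⊢
            rw [abs_sub_comm]
            exact this.trans hW
          exact mul_le_mul h1 (abs_le_linf V j k) (abs_nonneg _) hε₀.le
      _ = (n : ℝ) * ε₀ * linf V := by
          simp [Finset.sum_const, mul_assoc]
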